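/- Let k > 0, j₁, j₂, q₀ be real, I ⊆ ℝ an open set, and S̃ : I → ℝ differentiable. Define φ(x) = e^{k x²/2}(q₀ − x⁴) and S(x) = S̃(φ(x)) − j₁ x¹ − (2 j₁ + j₂) x² + k j₁ (x⁴ − q₀) x³ on the open set of x ∈ ℝ⁴ with φ(x) ∈ I. Then at every such x the derivatives of S along the invariant frame reproduce the canonical functions: −∂₁S = j₁; −e^{−k x²/2}(k x³ ∂₁S + ∂₄S) = S̃′(φ(x)); −e^{k x²/2} ∂₃S = k j₁ φ(x); and 2 ∂₁S − ∂₂S = j₂ − (k/2) φ(x) S̃′(φ(x)). -/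

import Mathlib

/-- Partial derivative `∂f/∂xⁱ` of a real-valued function on `ℝ⁴`. -/
noncomputable def pd (i : Fin 4) (f : (Fin 4 → ℝ) → ℝ) (x : Fin 4 → ℝ) : ℝ :=
  fderiv ℝ f x (Pi.single i 1)

/-- The map `φ(x) = e^{k x²/2}(q₀ − x⁴)`. -/
noncomputable def φmap (k q₀ : ℝ) (x : Fin 4 → ℝ) : ℝ :=
  Real.exp (k * x 1 / 2) * (q₀ - x 3)

/-- The candidate complete integral
`S(x) = S̃(φ(x)) − j₁x¹ − (2j₁+j₂)x² + kj₁(x⁴ − q₀)x³`. -/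
noncomputable def Sfun (k j₁ j₂ q₀ : ℝ) (St : ℝ → ℝ) (x : Fin 4 → ℝ) : ℝ :=
  St (φmap k q₀ x) - j₁ * x 0 - (2 * j₁ + j₂) * x 1 + k * j₁ * (x 3 - q₀) * x 2

/-!
By the chain rule, `∂ᵢS = S̃′(φ) ∂ᵢφ` plus the partials of the polynomial part, where
`∂₁φ = ∂₃φ = 0`, `∂₂φ = (k/2) φ` and `∂₄φ = −e^{kx²/2}`. The frame identities are then algebra:
in `ξ₂S` the `kx³∂₁S` term cancels the `kj₁x³` coming from `∂₄S`, and `e^{−kx²/2}` cancels the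
exponential in `∂₄φ`.
-/

open ContinuousLinearMap

theorem HasFDerivAt.pd_eq {f : (Fin 4 → ℝ) → ℝ} {f' : (Fin 4 → ℝ) →L[ℝ] ℝ} {x : Fin 4 → ℝ}
    (h : HasFDerivAt f f' x) (i : Fin 4) : pd i f x = f' (Pi.single i 1) := by
  rw [pd, h.fderiv]

theorem hasFDerivAt_φmap (k q₀ : ℝ) (x : Fin 4 → ℝ) :
    HasFDerivAt (φmap k q₀)
      (Real.exp (k * x 1 / 2) • ((k / 2 * (q₀ - x 3)) • proj 1 - proj 3) : (Fin 4 → ℝ) →L[ℝ] ℝ)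
      x := by
  have hcoord (i : Fin 4) := hasFDerivAt_apply (𝕜 := ℝ) (F' := fun _ : Fin 4 => ℝ) i x
  have hexp := (((hcoord 1).const_mul k).mul_const (2 : ℝ)⁻¹).exp
  refine (hexp.mul ((hcoord 3).const_sub q₀)).congr_fderiv ?_
  ext v
  simp only [smul_neg, add_apply, neg_apply, smul_apply, proj_apply, smul_eq_mul, div_eq_mul_inv,
    sub_apply]
  ring

theorem hasFDerivAt_Sfun (k j₁ j₂ q₀ : ℝ) {St : ℝ → ℝ} {x : Fin 4 → ℝ}
    (hSt : DifferentiableAt ℝ St (φmap k q₀ x)) :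
    HasFDerivAt (Sfun k j₁ j₂ q₀ St)
      (deriv St (φmap k q₀ x) •
          (Real.exp (k * x 1 / 2) • ((k / 2 * (q₀ - x 3)) • proj 1 - proj 3))
        - j₁ • proj 0 - (2 * j₁ + j₂) • proj 1
        + (k * j₁) • ((x 3 - q₀) • proj 2 + x 2 • proj 3) : (Fin 4 → ℝ) →L[ℝ] ℝ) x := by
  have hcoord (i : Fin 4) := hasFDerivAt_apply (𝕜 := ℝ) (F' := fun _ : Fin 4 => ℝ) i x
  have hcomp := hSt.hasDerivAt.comp_hasFDerivAt x (hasFDerivAt_φmap k q₀ x)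
  refine (((hcomp.sub ((hcoord 0).const_mul j₁)).sub ((hcoord 1).const_mul (2 * j₁ + j₂))).add
    ((((hcoord 3).sub_const q₀).const_mul (k * j₁)).mul (hcoord 2))).congr_fderiv ?_
  ext v
  simp only [add_apply, sub_apply, smul_apply, proj_apply, smul_eq_mul, smul_add]
  ring

theorem pd_zero_Sfun (k j₁ j₂ q₀ : ℝ) {St : ℝ → ℝ} {x : Fin 4 → ℝ}
    (hSt : DifferentiableAt ℝ St (φmap k q₀ x)) : pd 0 (Sfun k j₁ j₂ q₀ St) x = -j₁ := by
  simp [(hasFDerivAt_Sfun k j₁ j₂ q₀ hSt).pd_eq]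

theorem pd_one_Sfun (k j₁ j₂ q₀ : ℝ) {St : ℝ → ℝ} {x : Fin 4 → ℝ}
    (hSt : DifferentiableAt ℝ St (φmap k q₀ x)) :
    pd 1 (Sfun k j₁ j₂ q₀ St) x
      = k / 2 * φmap k q₀ x * deriv St (φmap k q₀ x) - (2 * j₁ + j₂) := by
  simp only [(hasFDerivAt_Sfun k j₁ j₂ q₀ hSt).pd_eq, φmap, smul_add, add_apply, sub_apply,
    smul_apply, proj_apply, Pi.single_eq_same, Pi.single_eq_of_ne, smul_eq_mul, mul_one, ne_eq,
    Fin.reduceEq, not_false_eq_true, mul_zero, add_zero, sub_zero]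
  ring

theorem pd_two_Sfun (k j₁ j₂ q₀ : ℝ) {St : ℝ → ℝ} {x : Fin 4 → ℝ}
    (hSt : DifferentiableAt ℝ St (φmap k q₀ x)) :
    pd 2 (Sfun k j₁ j₂ q₀ St) x = k * j₁ * (x 3 - q₀) := by
  simp [(hasFDerivAt_Sfun k j₁ j₂ q₀ hSt).pd_eq]

theorem pd_three_Sfun (k j₁ j₂ q₀ : ℝ) {St : ℝ → ℝ} {x : Fin 4 → ℝ}
    (hSt : DifferentiableAt ℝ St (φmap k q₀ x)) :
    pd 3 (Sfun k j₁ j₂ q₀ St) x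
      = -Real.exp (k * x 1 / 2) * deriv St (φmap k q₀ x) + k * j₁ * x 2 := by
  simp only [(hasFDerivAt_Sfun k j₁ j₂ q₀ hSt).pd_eq, smul_add, add_apply, sub_apply, smul_apply,
    proj_apply, Pi.single_eq_same, Pi.single_eq_of_ne, smul_eq_mul, mul_one, ne_eq,
    Fin.reduceEq, not_false_eq_true, mul_zero, sub_zero, zero_sub]
  ring

theorem frame_derivatives_of_S_general (k j₁ j₂ q₀ : ℝ) (I : Set ℝ)
    (St : ℝ → ℝ) (hSt : ∀ q ∈ I, DifferentiableAt ℝ St q)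
    (x : Fin 4 → ℝ) (hx : φmap k q₀ x ∈ I) :
    -(pd 0 (Sfun k j₁ j₂ q₀ St) x) = j₁ ∧
    -Real.exp (-(k * x 1) / 2) *
        (k * x 2 * pd 0 (Sfun k j₁ j₂ q₀ St) x + pd 3 (Sfun k j₁ j₂ q₀ St) x)
      = deriv St (φmap k q₀ x) ∧
    -Real.exp (k * x 1 / 2) * pd 2 (Sfun k j₁ j₂ q₀ St) x = k * j₁ * φmap k q₀ x ∧
    2 * pd 0 (Sfun k j₁ j₂ q₀ St) x - pd 1 (Sfun k j₁ j₂ q₀ St) x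
      = j₂ - k / 2 * φmap k q₀ x * deriv St (φmap k q₀ x) := by
  have hStx := hSt _ hx
  rw [pd_zero_Sfun k j₁ j₂ q₀ hStx, pd_one_Sfun k j₁ j₂ q₀ hStx, pd_two_Sfun k j₁ j₂ q₀ hStx,
    pd_three_Sfun k j₁ j₂ q₀ hStx]
  refine ⟨neg_neg j₁, ?_, by rw [φmap]; ring, by ring⟩
  rw [neg_div, Real.exp_neg]
  field_simp
  ring

/-- The derivatives of `S` along the invariant frame
`ξ₁ = −∂₁`, `ξ₂ = −e^{−kx²/2}(kx³∂₁ + ∂₄)`, `ξ₃ = −e^{kx²/2}∂₃`, `ξ₄ = 2∂₁ − ∂₂`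
reproduce the canonical functions `f₁ = j₁`, `f₂ = p`, `f₃ = kj₁q`, `f₄ = j₂ − (k/2)pq`
at `q = φ(x)`, `p = S̃′(φ(x))`. -/
theorem frame_derivatives_of_S (k j₁ j₂ q₀ : ℝ) (hk : 0 < k) (I : Set ℝ) (hI : IsOpen I)
    (St : ℝ → ℝ) (hSt : ∀ q ∈ I, DifferentiableAt ℝ St q)
    (x : Fin 4 → ℝ) (hx : φmap k q₀ x ∈ I) :
    -(pd 0 (Sfun k j₁ j₂ q₀ St) x) = j₁ ∧
    -Real.exp (-(k * x 1) / 2) *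
        (k * x 2 * pd 0 (Sfun k j₁ j₂ q₀ St) x + pd 3 (Sfun k j₁ j₂ q₀ St) x)
      = deriv St (φmap k q₀ x) ∧
    -Real.exp (k * x 1 / 2) * pd 2 (Sfun k j₁ j₂ q₀ St) x = k * j₁ * φmap k q₀ x ∧
    2 * pd 0 (Sfun k j₁ j₂ q₀ St) x - pd 1 (Sfun k j₁ j₂ q₀ St) x
      = j₂ - k / 2 * φmap k q₀ x * deriv St (φmap k q₀ x) :=
  frame_derivatives_of_S_general k j₁ j₂ q₀ I St hSt x hx
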